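/- For every c > 0, σ > 0, the sequence of moduli of the Benford–Fourier coefficients is strictly decreasing in n: for every positive integer n, |a_{n+1}| < |a_n|. -/

import Mathlib

open Real MeasureTheory

/-- Scale parameter β of the generalized Gaussian density. -/
noncomputable def ggdBeta (c σ : ℝ) : ℝ :=
  (1 / σ) * Real.sqrt (Real.Gamma (3 / c) / Real.Gamma (1 / c))

/-- Normalizing constant A of the generalized Gaussian density. -/
noncomputable def ggdA (c σ : ℝ) : ℝ :=
  ggdBeta c σ * c / (2 * Real.Gamma (1 / c))

/-- The generalized Gaussian density with shape factor `c` and scale `σ`. -/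
noncomputable def ggdPdf (c σ : ℝ) (x : ℝ) : ℝ :=
  ggdA c σ * Real.exp (-|ggdBeta c σ * x| ^ c)


/-- The `n`-th Benford–Fourier coefficient of the generalized Gaussian density:
`a_n = ∫ P_{c,σ}(x) · exp(−2πi·n·log₁₀|x|) dx`. -/
noncomputable def bfCoeff (c σ : ℝ) (n : ℕ) : ℂ :=
  ∫ x : ℝ, (ggdPdf c σ x : ℂ) *
    Complex.exp (-((2 * π * n * Real.logb 10 |x| : ℝ) : ℂ) * Complex.I)

/-!
Folding the integral onto `(0, ∞)` turns `a_n` into `2A` times the Mellin transform of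
`y ↦ exp (-(β y) ^ c)` at `s = 1 - i tₙ`, `tₙ = 2πn / log 10`, which is `β ^ (-s) c⁻¹ Γ (s / c)`.
Hence `‖a_n‖` is a fixed positive multiple of `‖Γ (1 / c - i tₙ / c)‖`, and it remains to see that
`‖Γ‖` strictly decreases as `|Im s|` grows with `Re s` fixed. In the Gauss product
`Γ s = lim N ^ s N! / ∏_{j ≤ N} (s + j)` every factor `‖s + j‖` grows with `|Im s|`, which gives the
weak inequality; applying it at `s + 1, t + 1` and using `Γ (s + 1) = s Γ s` with `‖s‖ < ‖t‖`
makes it strict.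
-/

open Set Filter Complex

namespace Complex

theorem sq_norm_sub_sq_norm_of_re_eq {z w : ℂ} (h : z.re = w.re) :
    ‖w‖ ^ 2 - ‖z‖ ^ 2 = w.im ^ 2 - z.im ^ 2 := by
  linarith [sq_norm_sub_sq_re z, sq_norm_sub_sq_re w, congrArg (· ^ 2) h]

theorem norm_le_norm_iff_abs_im_le_of_re_eq {z w : ℂ} (h : z.re = w.re) :
    ‖z‖ ≤ ‖w‖ ↔ |z.im| ≤ |w.im| := by
  rw [← sq_le_sq, ← sq_le_sq₀ (norm_nonneg z) (norm_nonneg w), ← sub_nonneg,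
    sq_norm_sub_sq_norm_of_re_eq h, sub_nonneg]

theorem norm_lt_norm_iff_abs_im_lt_of_re_eq {z w : ℂ} (h : z.re = w.re) :
    ‖z‖ < ‖w‖ ↔ |z.im| < |w.im| := by
  rw [← sq_lt_sq, ← sq_lt_sq₀ (norm_nonneg z) (norm_nonneg w), ← sub_pos,
    sq_norm_sub_sq_norm_of_re_eq h, sub_pos]

theorem norm_GammaSeq (s : ℂ) {n : ℕ} (hn : n ≠ 0) :
    ‖GammaSeq s n‖ = n ^ s.re * n.factorial / ∏ j ∈ Finset.range (n + 1), ‖s + j‖ := by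
  have hn' : (0 : ℝ) < n := by positivity
  rw [GammaSeq, norm_div, norm_mul, norm_prod, ← ofReal_natCast,
    norm_cpow_eq_rpow_re_of_pos hn', norm_natCast]

theorem norm_GammaSeq_le_of_abs_im_le {s t : ℂ} (hs : ∀ m : ℕ, s ≠ -m) (hre : s.re = t.re)
    (him : |s.im| ≤ |t.im|) {n : ℕ} (hn : n ≠ 0) : ‖GammaSeq t n‖ ≤ ‖GammaSeq s n‖ := by
  rw [norm_GammaSeq s hn, norm_GammaSeq t hn, hre]
  gcongr with j
  · exact Finset.prod_pos fun j _ => norm_pos_iff.2 fun h => hs j (eq_neg_of_add_eq_zero_left h)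
  · exact (norm_le_norm_iff_abs_im_le_of_re_eq (by simpa using hre)).2 (by simpa using him)

theorem norm_Gamma_le_of_abs_im_le {s t : ℂ} (hs : ∀ m : ℕ, s ≠ -m) (hre : s.re = t.re)
    (him : |s.im| ≤ |t.im|) : ‖Gamma t‖ ≤ ‖Gamma s‖ :=
  le_of_tendsto_of_tendsto (GammaSeq_tendsto_Gamma t).norm (GammaSeq_tendsto_Gamma s).norm
    (eventually_ne_atTop 0 |>.mono fun _ hn => norm_GammaSeq_le_of_abs_im_le hs hre him hn)

theorem norm_Gamma_lt_of_abs_im_lt {s t : ℂ} (hs : ∀ m : ℕ, s ≠ -m) (hre : s.re = t.re)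
    (him : |s.im| < |t.im|) : ‖Gamma t‖ < ‖Gamma s‖ := by
  have hst : ‖s‖ < ‖t‖ := (norm_lt_norm_iff_abs_im_lt_of_re_eq hre).2 him
  have hs0 : s ≠ 0 := by simpa using hs 0
  have ht0 : t ≠ 0 := norm_pos_iff.1 ((norm_nonneg s).trans_lt hst)
  have hs1 : ∀ m : ℕ, s + 1 ≠ -m := fun m h => hs (m + 1) (by push_cast; linear_combination h)
  have hstep : ‖Gamma (t + 1)‖ ≤ ‖Gamma (s + 1)‖ :=
    norm_Gamma_le_of_abs_im_le hs1 (by simpa using hre) (by simpa using him.le)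
  rw [Gamma_add_one t ht0, Gamma_add_one s hs0, norm_mul, norm_mul] at hstep
  have hΓs : 0 < ‖Gamma s‖ := norm_pos_iff.2 (Gamma_ne_zero hs)
  exact lt_of_mul_lt_mul_left (hstep.trans_lt (mul_lt_mul_of_pos_right hst hΓs)) (norm_nonneg t)

theorem exp_neg_mul_log_mul_I {y : ℝ} (hy : 0 < y) (t : ℝ) :
    exp (-((t * Real.log y : ℝ) : ℂ) * I) = (y : ℂ) ^ (-(t * I)) := by
  rw [cpow_def_of_ne_zero (ofReal_ne_zero.2 hy.ne'), ← ofReal_log hy.le]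
  push_cast
  ring_nf

end Complex

theorem integral_comp_abs' {E : Type*} [NormedAddCommGroup E] [NormedSpace ℝ E] (f : ℝ → E) :
    ∫ x, f |x| = (2 : ℝ) • ∫ x in Ioi 0, f x := by
  have hIoi : EqOn (fun x => f |x|) f (Ioi 0) := fun x hx => by simp [abs_of_pos (mem_Ioi.1 hx)]
  by_cases hf : IntegrableOn f (Ioi 0)
  · have hpos : IntegrableOn (fun x => f |x|) (Ioi (-0)) := by
      rw [neg_zero]
      exact hf.congr_fun hIoi.symm measurableSet_Ioi
    have hneg : IntegrableOn (fun x => f |x|) (Iic 0) := by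
      rw [integrableOn_Iic_iff_integrableOn_Iio]
      simpa only [abs_neg] using hpos.comp_neg_Iio
    have hint : Integrable fun x => f |x| := by
      rw [← integrableOn_univ, ← Iic_union_Ioi (a := (0 : ℝ))]
      exact hneg.union (by rwa [neg_zero] at hpos)
    have hIic : ∫ x in Iic 0, f |x| = ∫ x in Ioi 0, f x := by
      have hreflect := integral_comp_neg_Ioi 0 fun x => f |x|
      simp only [neg_zero, abs_neg] at hreflect
      rw [← hreflect]
      exact setIntegral_congr_fun measurableSet_Ioi hIoi
    rw [← integral_add_compl measurableSet_Ioi hint, compl_Ioi, hIic,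
      setIntegral_congr_fun measurableSet_Ioi hIoi, two_smul]
  · have : ¬ Integrable fun x => f |x| := fun h =>
      hf (h.integrableOn.congr_fun hIoi measurableSet_Ioi)
    rw [integral_undef this, integral_undef hf, smul_zero]

theorem mellin_exp_neg_mul_rpow {c β : ℝ} (hc : 0 < c) (hβ : 0 < β) {s : ℂ} (hs : 0 < s.re) :
    mellin (fun y : ℝ => (Real.exp (-(β * y) ^ c) : ℂ)) s =
      (β : ℂ) ^ (-s) * (c⁻¹ * Gamma (s / c)) := by
  have hsc : 0 < (s / c).re := by rw [div_ofReal_re]; positivity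
  rw [mellin_comp_mul_left (fun y : ℝ => (Real.exp (-y ^ c) : ℂ)) s hβ,
    mellin_comp_rpow (fun y : ℝ => (Real.exp (-y) : ℂ)), ← GammaIntegral_eq_mellin,
    ← Complex.Gamma_eq_integral hsc, abs_of_pos hc, smul_eq_mul, real_smul, ofReal_inv]

section GeneralizedGaussian

variable {c σ : ℝ}

theorem ggdBeta_pos (hc : 0 < c) (hσ : 0 < σ) : 0 < ggdBeta c σ := by
  have h1 := Real.Gamma_pos_of_pos (one_div_pos.2 hc)
  have h3 := Real.Gamma_pos_of_pos (div_pos three_pos hc)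
  unfold ggdBeta
  positivity

theorem ggdA_pos (hc : 0 < c) (hσ : 0 < σ) : 0 < ggdA c σ := by
  have hβ := ggdBeta_pos hc hσ
  have h1 := Real.Gamma_pos_of_pos (one_div_pos.2 hc)
  unfold ggdA
  positivity

theorem ggdPdf_abs (c σ x : ℝ) : ggdPdf c σ |x| = ggdPdf c σ x := by
  simp only [ggdPdf, abs_mul, abs_abs]

theorem bfCoeff_eq_mellin (hc : 0 < c) (hσ : 0 < σ) (n : ℕ) :
    bfCoeff c σ n = 2 * ggdA c σ *
      mellin (fun y : ℝ => (Real.exp (-(ggdBeta c σ * y) ^ c) : ℂ))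
        (1 - (2 * π * n / Real.log 10 : ℝ) * I) := by
  have hβ := ggdBeta_pos hc hσ
  set F : ℝ → ℂ := fun y => ggdPdf c σ y * exp (-((2 * π * n * Real.logb 10 y : ℝ) : ℂ) * I)
  calc bfCoeff c σ n = ∫ x, F |x| := by simp only [bfCoeff, F, ggdPdf_abs]
    _ = (2 : ℝ) • ∫ y in Ioi 0, F y := integral_comp_abs' F
    _ = _ := by
      rw [mellin, real_smul, ← integral_const_mul, ← integral_const_mul]
      refine setIntegral_congr_fun measurableSet_Ioi fun y (hy : 0 < y) => ?_
      have hlogb : 2 * π * n * Real.logb 10 y = 2 * π * n / Real.log 10 * Real.log y := by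
        rw [Real.logb]
        ring
      simp only [F, ggdPdf, hlogb, exp_neg_mul_log_mul_I hy, abs_of_pos (mul_pos hβ hy),
        sub_sub_cancel_left, smul_eq_mul]
      push_cast
      ring

theorem norm_bfCoeff (hc : 0 < c) (hσ : 0 < σ) (n : ℕ) :
    ‖bfCoeff c σ n‖ = 2 * ggdA c σ / (ggdBeta c σ * c) *
      ‖Gamma ((1 - (2 * π * n / Real.log 10 : ℝ) * I) / c)‖ := by
  have hβ := ggdBeta_pos hc hσ
  rw [bfCoeff_eq_mellin hc hσ]
  generalize (2 * π * n / Real.log 10 : ℝ) = t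
  have hre : (1 - t * I).re = 1 := by simp
  rw [mellin_exp_neg_mul_rpow hc hβ (by rw [hre]; exact one_pos), norm_mul, norm_mul,
    norm_mul, norm_mul, norm_cpow_eq_rpow_re_of_pos hβ, neg_re, hre, Real.rpow_neg_one]
  simp only [Complex.norm_ofNat, norm_real, norm_inv, Real.norm_eq_abs, abs_of_pos hc,
    abs_of_pos (ggdA_pos hc hσ)]
  field_simp

end GeneralizedGaussian

theorem bfCoeff_abs_strictAnti_general (c σ : ℝ) (hc : 0 < c) (hσ : 0 < σ) (n : ℕ) :
    ‖bfCoeff c σ (n + 1)‖ < ‖bfCoeff c σ n‖ := by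
  have hK : 0 < 2 * ggdA c σ / (ggdBeta c σ * c) := by
    have := ggdA_pos hc hσ
    have := ggdBeta_pos hc hσ
    positivity
  rw [norm_bfCoeff hc hσ, norm_bfCoeff hc hσ]
  refine mul_lt_mul_of_pos_left (norm_Gamma_lt_of_abs_im_lt (fun m h => ?_) ?_ ?_) hK
  · have hre := congrArg re h
    simp only [div_ofReal_re, sub_re, one_re, re_ofReal_mul, I_re, mul_zero, sub_zero, neg_re,
      natCast_re] at hre
    linarith [one_div_pos.2 hc, (Nat.cast_nonneg m : (0 : ℝ) ≤ m)]
  · simp only [div_ofReal_re, sub_re, one_re, re_ofReal_mul, I_re, mul_zero, sub_zero]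
  · simp only [div_ofReal_im, sub_im, one_im, im_ofReal_mul, I_im, mul_one, zero_sub, abs_div,
      abs_neg, abs_of_pos hc]
    rw [abs_of_nonneg (by positivity : (0 : ℝ) ≤ 2 * π * n),
      abs_of_nonneg (by positivity : (0 : ℝ) ≤ 2 * π * (n + 1 : ℕ))]
    gcongr
    exact_mod_cast n.lt_succ_self

/-- The moduli of the Benford–Fourier coefficients are strictly decreasing in `n`. -/
theorem bfCoeff_abs_strictAnti (c σ : ℝ) (hc : 0 < c) (hσ : 0 < σ) (n : ℕ) (hn : 0 < n) :
    ‖bfCoeff c σ (n + 1)‖ < ‖bfCoeff c σ n‖ :=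
  bfCoeff_abs_strictAnti_general c σ hc hσ n
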